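/- The vectors v = (1, −1, 0, 0, 0, 0) and w = (0, 0, 0, 0, 1, 1) in ℤ⁶ both satisfy ⟨v,v⟩ = ⟨w,w⟩ = −2, yet there is no B ∈ O(T) with B·v = w. -/

import Mathlib

open Matrix

/-- Gram matrix of the lattice `T = U ⊥ U ⊥ ⟨-1⟩ ⊥ ⟨-1⟩` on `ℤ⁶`. -/
def G6 : Matrix (Fin 6) (Fin 6) ℤ :=
  !![0, 1, 0, 0, 0, 0;
     1, 0, 0, 0, 0, 0;
     0, 0, 0, 1, 0, 0;
     0, 0, 1, 0, 0, 0;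
     0, 0, 0, 0, -1, 0;
     0, 0, 0, 0, 0, -1]

/-- The bilinear form `⟨x, y⟩ = xᵀ G y` of the lattice `T`. -/
def bilT (x y : Fin 6 → ℤ) : ℤ := x ⬝ᵥ G6.mulVec y

/-- Membership in the orthogonal group `O(T)`: an integral matrix `B` with unit
determinant (so `B ∈ GL(6, ℤ)`) satisfying `Bᵀ G B = G`. -/
def MemOT (B : Matrix (Fin 6) (Fin 6) ℤ) : Prop :=
  IsUnit B.det ∧ Bᵀ * G6 * B = G6

/-- A vector of `ℤ⁶` is primitive if the gcd of its coordinates is `1`. -/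
def IsPrimitive (x : Fin 6 → ℤ) : Prop := Finset.univ.gcd x = 1

/-- A vector `x` is characteristic if `⟨x, y⟩ ≡ ⟨y, y⟩ (mod 2)` for all `y`. -/
def IsCharacteristic (x : Fin 6 → ℤ) : Prop :=
  ∀ y : Fin 6 → ℤ, bilT x y ≡ bilT y y [ZMOD 2]

@[simp] lemma cons_val_five' {α : Type*} (a : α) (u : Fin 5 → α) :
    vecCons a u (5 : Fin 6) = u 4 := rfl

/-- `O(T)` preserves the bilinear form. -/
lemma bilT_invariant (B : Matrix (Fin 6) (Fin 6) ℤ) (h : Bᵀ * G6 * B = G6)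
    (x y : Fin 6 → ℤ) : bilT (B.mulVec x) (B.mulVec y) = bilT x y := by
  unfold bilT
  rw [Matrix.dotProduct_mulVec, Matrix.dotProduct_mulVec, ← Matrix.vecMul_transpose,
      Matrix.vecMul_vecMul, Matrix.vecMul_vecMul, ← Matrix.mul_assoc, h,
      ← Matrix.dotProduct_mulVec]

/-- Explicit formula for the bilinear form. -/
lemma bilT_expand (x y : Fin 6 → ℤ) :
    bilT x y = x 0 * y 1 + x 1 * y 0 + x 2 * y 3 + x 3 * y 2 - x 4 * y 4 - x 5 * y 5 := by
  simp [bilT, G6, Matrix.mulVec, dotProduct, Fin.sum_univ_six,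
    Matrix.vecHead, Matrix.vecTail]
  ring

lemma sq_emod_two (n : ℤ) : n * n % 2 = n % 2 := by
  rw [Int.mul_emod]
  rcases Int.emod_two_eq n with h | h <;> rw [h] <;> decide

theorem stmt5 :
    bilT ![1, -1, 0, 0, 0, 0] ![1, -1, 0, 0, 0, 0] = -2 ∧
    bilT ![0, 0, 0, 0, 1, 1] ![0, 0, 0, 0, 1, 1] = -2 ∧
    ¬ ∃ B : Matrix (Fin 6) (Fin 6) ℤ, MemOT B ∧
        B.mulVec ![1, -1, 0, 0, 0, 0] = ![0, 0, 0, 0, 1, 1] := by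
  refine ⟨by rw [bilT_expand]; rfl, by rw [bilT_expand]; rfl, ?_⟩
  rintro ⟨B, ⟨-, h⟩, hv⟩
  set z := B.mulVec ![1, 0, 0, 0, 0, 0] with hz
  have E1 : bilT ![0, 0, 0, 0, 1, 1] z = -1 := by
    rw [← hv, hz, bilT_invariant B h, bilT_expand]; rfl
  have E2 : bilT z z = 0 := by
    rw [hz, bilT_invariant B h, bilT_expand]; rfl
  rw [bilT_expand] at E1 E2
  change 0 * z 1 + 0 * z 0 + 0 * z 3 + 0 * z 2 - 1 * z 4 - 1 * z 5 = -1 at E1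
  norm_num at E1
  have p4 := sq_emod_two (z 4)
  have p5 := sq_emod_two (z 5)
  have E2' : z 0 * z 1 + z 0 * z 1 + (z 2 * z 3 + z 2 * z 3) - z 4 * z 4 - z 5 * z 5 = 0 := by
    linarith [E2]
  generalize z 0 * z 1 = a at E2'
  generalize z 2 * z 3 = b at E2'
  generalize z 4 * z 4 = c at E2' p4
  generalize z 5 * z 5 = d at E2' p5
  omega
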